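/- arXiv:1312.4094 — 2 statements merged into one kernel-verified Lean document; each statement's English description precedes it below -/
import Mathlib

section
/- Under the stated conditions, the composite function g(x₁,x₂,(h̃,a,v₁),e) := ψ(φ(x₁,v₁,a), φ(x₂,h̃,e,a)) is continuously differentiable in (x₂,e) with ∂_e g = ∂_{y₂}ψ · ∂_e φ ≥ 1/(KC) and ‖∂_{x₂} g‖ = ∂_{y₂}ψ · ‖∂_x φ‖ ≤ KC; hence, if the conditional density of Ỹ = ψ(Y₁,Y₂) given X₁ = x₁, X₂ = x₂ is positive everywhere, then for every τ ∈ (0,1) the conditional τ-quantile q̃(τ,x₁,x₂) of Ỹ given X₁ = x₁, X₂ = x₂ exists, is continuously differentiable in x₂, and ∂_{x₂} q̃(τ,x₁,x₂) equals the conditional average of ∂_{y₂}ψ(Y₁,Y₂) · ∂_x φ(x₂,V₂,A) given Ỹ = q̃(τ,x₁,x₂), X₁ = x₁, X₂ = x₂, expressed as the ratio −∂_{x₂}H̃(q̃,x₂)/∂_yH̃(q̃,x₂) of the derivatives of the conditional CDF H̃ of Ỹ. -/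
/-!
The composite `g = ψ (φ (x₁, v₁, a), φ (x₂, h̃, e, a))` is `C¹` with `∂ₑ g ≥ 1 / (K C)` and
`‖∂ₓ g‖ ≤ K C` by the chain rule. Since `g` is strictly increasing in `e`, `g (x₂, e) ≤ y` iff
`e ≤ ℓ (y, x₂)` for a `C¹` level function `ℓ` (implicit function theorem) whose gradient is bounded
by `(1 + K C) K C`. Each inner integral of `H̃` is therefore `F_E (ℓ (y, x₂))`, with `F_E` the CDF
of a continuous bounded density, so its gradient is bounded uniformly in `h`, and differentiating
under the outer integral shows that `H̃` is jointly `C¹`. By dominated convergence `H̃ (·, x₂)` runs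
from `0` to `1`, and its derivative is positive, so every level `τ ∈ (0, 1)` is attained exactly
once; a global implicit function theorem then gives the quantile and `∂q̃ = -∂ₓH̃ / ∂_y H̃`.
-/

open MeasureTheory Filter Set Topology

section PartialDerivatives

variable {P : Type*} [NormedAddCommGroup P] [NormedSpace ℝ P]
  {F : P × ℝ → ℝ} {L : P × ℝ →L[ℝ] ℝ} {x : P} {t : ℝ}

theorem HasFDerivAt.hasDerivAt_comp_prodMk_right (hF : HasFDerivAt F L (x, t)) :
    HasDerivAt (fun s => F (x, s)) (L (0, 1)) t :=
  hF.comp_hasDerivAt t ((hasDerivAt_const _ _).prodMk (hasDerivAt_id _))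

theorem HasFDerivAt.hasFDerivAt_comp_prodMk_left (hF : HasFDerivAt F L (x, t)) :
    HasFDerivAt (fun z => F (z, t)) (L ∘L .inl ℝ P ℝ) x :=
  hF.comp x (hasFDerivAt_prodMk_left x t)

theorem HasFDerivAt.apply_eq_fderiv_add_deriv (hF : HasFDerivAt F L (x, t)) (ξ : P) (η : ℝ) :
    L (ξ, η) = fderiv ℝ (fun z => F (z, t)) x ξ + η * deriv (fun s => F (x, s)) t := by
  rw [hF.hasFDerivAt_comp_prodMk_left.fderiv, hF.hasDerivAt_comp_prodMk_right.deriv,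
    ← smul_eq_mul, ← map_smul, ContinuousLinearMap.comp_apply, ← map_add]
  simp

end PartialDerivatives

theorem ContinuousLinearMap.isInvertible_of_apply_one_ne_zero {L : ℝ →L[ℝ] ℝ} (h : L 1 ≠ 0) :
    L.IsInvertible := by
  refine .of_inverse (g := (L 1)⁻¹ • .id ℝ ℝ) ?_ ?_ <;>
    ext <;> simp [h]

section Implicit

variable {P : Type*} [NormedAddCommGroup P] [NormedSpace ℝ P] {F : P × ℝ → ℝ} {r : P → ℝ} {c : ℝ}

theorem fderiv_eq_of_apply_eq_const {x : P} (hF : DifferentiableAt ℝ F (x, r x))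
    (hr : DifferentiableAt ℝ r x) (hc : ∀ z, F (z, r z) = c)
    (hd : deriv (fun t => F (x, t)) (r x) ≠ 0) :
    fderiv ℝ r x
      = -(deriv (fun t => F (x, t)) (r x))⁻¹ • fderiv ℝ (fun z => F (z, r x)) x := by
  have hcomp := hF.hasFDerivAt.comp x ((hasFDerivAt_id x).prodMk hr.hasFDerivAt)
  have hzero : HasFDerivAt (fun z => F (z, r z)) (0 : P →L[ℝ] ℝ) x := by
    simpa only [hc] using hasFDerivAt_const c x
  ext ξ
  have hξ := congrArg (· ξ) (hcomp.unique hzero)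
  simp only [ContinuousLinearMap.comp_apply, ContinuousLinearMap.prod_apply,
    ContinuousLinearMap.id_apply, zero_apply,
    hF.hasFDerivAt.apply_eq_fderiv_add_deriv] at hξ
  simp only [smul_apply, smul_eq_mul]
  field_simp
  linarith

variable [CompleteSpace P]

theorem contDiffAt_of_apply_eq_const {x₀ : P} (hF : ContDiff ℝ 1 F)
    (hinj : ∀ x, Function.Injective (fun t => F (x, t))) (hc : ∀ x, F (x, r x) = c)
    (hd : deriv (fun t => F (x₀, t)) (r x₀) ≠ 0) : ContDiffAt ℝ 1 r x₀ := by
  have hF₀ : ContDiffAt ℝ 1 F (x₀, r x₀) := hF.contDiffAt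
  have hinv : (fderiv ℝ F (x₀, r x₀) ∘L .inr ℝ P ℝ).IsInvertible := by
    refine ContinuousLinearMap.isInvertible_of_apply_one_ne_zero ?_
    rwa [ContinuousLinearMap.comp_apply, ContinuousLinearMap.inr_apply,
      ← ((hF.differentiable one_ne_zero) _).hasFDerivAt.hasDerivAt_comp_prodMk_right.deriv]
  refine (hF₀.contDiffAt_implicitFunction one_ne_zero hinv).congr_of_eventuallyEq ?_
  filter_upwards [hF₀.eventually_apply_implicitFunction one_ne_zero hinv] with x hx
  exact hinj x (show F (x, r x) = F (x, _) by rw [hx, hc, hc])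

theorem exists_contDiff_implicit (hF : ContDiff ℝ 1 F)
    (hd : ∀ x t, 0 < deriv (fun s => F (x, s)) t) (hex : ∀ x, ∃ t, F (x, t) = c) :
    ∃ r : P → ℝ, ContDiff ℝ 1 r ∧ (∀ x, F (x, r x) = c) ∧
      (∀ x t, F (x, t) = c → t = r x) ∧
      ∀ x, fderiv ℝ r x
        = -(deriv (fun t => F (x, t)) (r x))⁻¹ • fderiv ℝ (fun z => F (z, r x)) x := by
  choose r hr using hex
  have hinj : ∀ x, Function.Injective (fun t => F (x, t)) := fun x =>
    (strictMono_of_deriv_pos (hd x)).injective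
  have hrC : ContDiff ℝ 1 r := contDiff_iff_contDiffAt.2 fun x =>
    contDiffAt_of_apply_eq_const hF hinj hr (hd x (r x)).ne'
  refine ⟨r, hrC, hr, fun x t ht => hinj x (ht.trans (hr x).symm), fun x => ?_⟩
  exact fderiv_eq_of_apply_eq_const ((hF.differentiable one_ne_zero) _)
    ((hrC.differentiable one_ne_zero) x) hr (hd x (r x)).ne'

end Implicit

theorem hasDerivAt_integral_Iic {E : Type*} [NormedAddCommGroup E] [NormedSpace ℝ E]
    [CompleteSpace E] {f : ℝ → E} {t : ℝ} (hf : Integrable f) (hft : ContinuousAt f t) :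
    HasDerivAt (fun s => ∫ e in Iic s, f e) (f t) t := by
  have hsplit : ∀ s, ∫ e in Iic s, f e = (∫ e in Iic 0, f e) + ∫ e in (0 : ℝ)..s, f e := fun s => by
    rw [← intervalIntegral.integral_Iic_sub_Iic hf.integrableOn hf.integrableOn]; abel
  rw [funext hsplit]
  exact (intervalIntegral.integral_hasDerivAt_right hf.intervalIntegrable
    hf.aestronglyMeasurable.stronglyMeasurableAtFilter hft).const_add _

theorem surjective_of_le_deriv {g : ℝ → ℝ} {δ : ℝ} (hg : Differentiable ℝ g)
    (hδ : 0 < δ) (hδg : ∀ t, δ ≤ deriv g t) : Function.Surjective g := by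
  have hmono : Monotone (fun t => g t - δ * t) := by
    refine monotone_of_deriv_nonneg (hg.sub (differentiable_id.const_mul δ)) fun t => ?_
    rw [((hg t).hasDerivAt.fun_sub ((hasDerivAt_id' t).const_mul δ)).deriv]
    linarith [hδg t]
  have htop : Tendsto (fun t => g 0 + δ * t) atTop atTop :=
    tendsto_atTop_add_const_left _ _ (tendsto_id.const_mul_atTop hδ)
  have hbot : Tendsto (fun t => g 0 + δ * t) atBot atBot :=
    tendsto_atBot_add_const_left _ _ (tendsto_id.const_mul_atBot hδ)
  refine hg.continuous.surjective (tendsto_atTop_mono' _ ?_ htop) (tendsto_atBot_mono' _ ?_ hbot)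
  · filter_upwards [eventually_ge_atTop 0] with t ht
    linarith [hmono ht]
  · filter_upwards [eventually_le_atBot 0] with t ht
    linarith [hmono ht]

theorem tendsto_integral_mul_of_tendsto {ι α : Type*} [MeasurableSpace α] {μ : Measure α}
    {l : Filter ι} [l.IsCountablyGenerated] {W : ι → α → ℝ} {ρ : α → ℝ} {c : ℝ}
    (hmeas : ∀ i, AEStronglyMeasurable (fun a => W i a * ρ a) μ) (hW : ∀ i a, |W i a| ≤ 1)
    (hρ : Integrable ρ μ) (hlim : ∀ a, Tendsto (W · a) l (𝓝 c)) :
    Tendsto (fun i => ∫ a, W i a * ρ a ∂μ) l (𝓝 (c * ∫ a, ρ a ∂μ)) := by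
  rw [← integral_const_mul]
  refine tendsto_integral_filter_of_dominated_convergence (fun a => ‖ρ a‖) (.of_forall hmeas)
    (.of_forall fun i => .of_forall fun a => ?_) hρ.norm (.of_forall fun a => (hlim a).mul_const _)
  rw [norm_mul]
  exact mul_le_of_le_one_left (norm_nonneg _) (hW i a)

theorem integrable_of_deriv_integral_pos {α : Type*} [MeasurableSpace α] {μ : Measure α}
    {g : ℝ → α → ℝ} (hg : ∀ y a, 0 ≤ g y a) {y₀ : ℝ}
    (hpos : 0 < deriv (fun y => ∫ a, g y a ∂μ) y₀) : Integrable (g y₀) μ := by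
  by_contra hni
  -- the integral would then take the junk value `0` at `y₀`, a minimum of a nonnegative function
  have hmin : IsLocalMin (fun y => ∫ a, g y a ∂μ) y₀ := .of_forall fun y => by
    simp only [integral_undef hni]
    exact integral_nonneg (hg y)
  exact hpos.ne' hmin.deriv_eq_zero

section SublevelMass

variable {E : Type*} {G : E × ℝ → ℝ} {f : ℝ → ℝ} {δ M B : ℝ}

/-- The distribution function at `y` of `G (x, ε)` when `ε` has density `f`. -/
noncomputable def sublevelMass (G : E × ℝ → ℝ) (f : ℝ → ℝ) (y : ℝ) (x : E) : ℝ :=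
  ∫ e, if G (x, e) ≤ y then f e else 0

theorem integrable_sublevelMass_integrand {x : E} (hG : Continuous fun e => G (x, e))
    (hf : Integrable f) (y : ℝ) : Integrable fun e => if G (x, e) ≤ y then f e else 0 :=
  (hf.indicator (s := {e | G (x, e) ≤ y}) (measurableSet_le hG.measurable measurable_const)).congr
    (.of_forall fun e => by simp [indicator_apply])

theorem sublevelMass_nonneg (hf : ∀ e, 0 ≤ f e) (y : ℝ) (x : E) : 0 ≤ sublevelMass G f y x :=
  integral_nonneg fun e => by dsimp only; split_ifs <;> simp [hf e]

theorem sublevelMass_le_integral {x : E} (hG : Continuous fun e => G (x, e)) (hf : Integrable f)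
    (hf0 : ∀ e, 0 ≤ f e) (y : ℝ) : sublevelMass G f y x ≤ ∫ e, f e :=
  integral_mono (integrable_sublevelMass_integrand hG hf y) hf fun e => by
    dsimp only; split_ifs <;> simp [hf0 e]

theorem tendsto_sublevelMass_atTop {x : E} (hG : Continuous fun e => G (x, e))
    (hf : Integrable f) : Tendsto (sublevelMass G f · x) atTop (𝓝 (∫ e, f e)) :=
  tendsto_integral_filter_of_dominated_convergence (fun e => ‖f e‖)
    (.of_forall fun y => (integrable_sublevelMass_integrand hG hf y).aestronglyMeasurable)
    (.of_forall fun y => .of_forall fun e => by split_ifs <;> simp) hf.norm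
    (.of_forall fun e => tendsto_const_nhds.congr' <| by
      filter_upwards [eventually_ge_atTop (G (x, e))] with y hy
      simp [hy])

theorem tendsto_sublevelMass_atBot {x : E} (hG : Continuous fun e => G (x, e))
    (hf : Integrable f) : Tendsto (sublevelMass G f · x) atBot (𝓝 0) := by
  refine integral_zero ℝ ℝ ▸ tendsto_integral_filter_of_dominated_convergence (fun e => ‖f e‖)
    (.of_forall fun y => (integrable_sublevelMass_integrand hG hf y).aestronglyMeasurable)
    (.of_forall fun y => .of_forall fun e => by split_ifs <;> simp) hf.norm
    (.of_forall fun e => tendsto_const_nhds.congr' ?_)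
  filter_upwards [eventually_lt_atBot (G (x, e))] with y hy
  simp [hy.not_ge]

theorem sublevelMass_eq_integral_Iic {x : E} {e₀ : ℝ} (hG : StrictMono fun e => G (x, e))
    (he₀ : G (x, e₀) = y) : sublevelMass G f y x = ∫ e in Iic e₀, f e := by
  rw [sublevelMass, ← integral_indicator measurableSet_Iic]
  congr 1
  funext e
  simp [indicator_apply, ← he₀, hG.le_iff_le]

variable [NormedAddCommGroup E] [NormedSpace ℝ E] [CompleteSpace E]

theorem exists_contDiff_level (hG : ContDiff ℝ 1 G) (hδ : 0 < δ)
    (hGe : ∀ x e, δ ≤ deriv (fun t => G (x, t)) e)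
    (hGx : ∀ x e, ‖fderiv ℝ (fun z => G (z, e)) x‖ ≤ M) :
    ∃ ℓ : ℝ × E → ℝ, ContDiff ℝ 1 ℓ ∧ (∀ q, G (q.2, ℓ q) = q.1) ∧
      ∀ q, ‖fderiv ℝ ℓ q‖ ≤ (1 + M) / δ := by
  have hderiv : ∀ (q : ℝ × E) t, deriv (fun s => G (q.2, s) - q.1) t
      = deriv (fun s => G (q.2, s)) t := fun q t => deriv_sub_const _
  have hslice : ∀ x, Differentiable ℝ fun t => G (x, t) := fun x =>
    (hG.comp (contDiff_const.prodMk contDiff_id)).differentiable one_ne_zero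
  obtain ⟨ℓ, hℓC, hℓ, -, hℓd⟩ := exists_contDiff_implicit (c := 0)
    (F := fun p : (ℝ × E) × ℝ => G (p.1.2, p.2) - p.1.1)
    ((hG.comp ((contDiff_snd.comp contDiff_fst).prodMk contDiff_snd)).sub
      (contDiff_fst.comp contDiff_fst))
    (fun q t => by rw [hderiv]; exact hδ.trans_le (hGe q.2 t))
    (fun q => by
      obtain ⟨t, ht⟩ := surjective_of_le_deriv (hslice q.2) hδ (hGe q.2) q.1
      exact ⟨t, sub_eq_zero.2 ht⟩)
  refine ⟨ℓ, hℓC, fun q => sub_eq_zero.1 (hℓ q), fun q => ?_⟩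
  set A := fderiv ℝ (fun x => G (x, ℓ q)) q.2
  have hA : HasFDerivAt (fun z : ℝ × E => G (z.2, ℓ q) - z.1)
      (A ∘L ContinuousLinearMap.snd ℝ ℝ E - ContinuousLinearMap.fst ℝ ℝ E) q :=
    ((((hG.comp (contDiff_id.prodMk contDiff_const)).differentiable one_ne_zero)
      q.2).hasFDerivAt.comp q hasFDerivAt_snd).sub hasFDerivAt_fst
  have hAnorm : ‖A ∘L ContinuousLinearMap.snd ℝ ℝ E - ContinuousLinearMap.fst ℝ ℝ E‖ ≤ M + 1 :=
    calc _ ≤ ‖A‖ * ‖ContinuousLinearMap.snd ℝ ℝ E‖ + ‖ContinuousLinearMap.fst ℝ ℝ E‖ :=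
          (norm_sub_le _ _).trans (add_le_add_left (A.opNorm_comp_le _) _)
      _ ≤ M * 1 + 1 := by
          gcongr
          · exact (norm_nonneg A).trans (hGx q.2 (ℓ q))
          · exact hGx q.2 (ℓ q)
          · exact ContinuousLinearMap.norm_snd_le ℝ ℝ E
          · exact ContinuousLinearMap.norm_fst_le ℝ ℝ E
      _ = M + 1 := by ring
  have hd : δ ≤ deriv (fun t => G (q.2, t) - q.1) (ℓ q) := by rw [hderiv]; exact hGe _ _
  rw [hℓd q, hA.fderiv, norm_smul, norm_neg, norm_inv, Real.norm_of_nonneg (hδ.le.trans hd),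
    div_eq_inv_mul, add_comm]
  exact mul_le_mul (inv_anti₀ hδ hd) hAnorm (norm_nonneg _) (inv_nonneg.2 hδ.le)

theorem contDiff_sublevelMass (hG : ContDiff ℝ 1 G) (hδ : 0 < δ)
    (hGe : ∀ x e, δ ≤ deriv (fun t => G (x, t)) e)
    (hGx : ∀ x e, ‖fderiv ℝ (fun z => G (z, e)) x‖ ≤ M)
    (hf : Continuous f) (hf_int : Integrable f) (hfB : ∀ e, ‖f e‖ ≤ B) :
    ContDiff ℝ 1 (fun q : ℝ × E => sublevelMass G f q.1 q.2) ∧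
      ∀ q, ‖fderiv ℝ (fun q : ℝ × E => sublevelMass G f q.1 q.2) q‖ ≤ B * ((1 + M) / δ) := by
  obtain ⟨ℓ, hℓC, hℓ, hℓd⟩ := exists_contDiff_level hG hδ hGe hGx
  have hcdf : ∀ t, HasDerivAt (fun s => ∫ e in Iic s, f e) (f t) t := fun t =>
    hasDerivAt_integral_Iic hf_int hf.continuousAt
  have hcdfC : ContDiff ℝ 1 (fun s => ∫ e in Iic s, f e) :=
    contDiff_one_iff_deriv.2 ⟨fun t => (hcdf t).differentiableAt, by
      simpa only [funext fun t => (hcdf t).deriv] using hf⟩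
  have heq : (fun q : ℝ × E => sublevelMass G f q.1 q.2) = (fun s => ∫ e in Iic s, f e) ∘ ℓ :=
    funext fun q => sublevelMass_eq_integral_Iic
      (strictMono_of_deriv_pos fun t => hδ.trans_le (hGe q.2 t)) (hℓ q)
  rw [heq]
  refine ⟨hcdfC.comp hℓC, fun q => ?_⟩
  rw [((hcdf (ℓ q)).comp_hasFDerivAt q ((hℓC.differentiable one_ne_zero) q).hasFDerivAt).fderiv,
    norm_smul]
  exact mul_le_mul (hfB _) (hℓd q) (norm_nonneg _) ((norm_nonneg _).trans (hfB 0))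

end SublevelMass

section ParametricIntegral

variable {α : Type*} [MeasurableSpace α] {μ : Measure α}
  {Q : Type*} [NormedAddCommGroup Q] [NormedSpace ℝ Q]
  {V : Type*} [NormedAddCommGroup V] [NormedSpace ℝ V] {F : Q → α → V} {q₀ : Q}

theorem aestronglyMeasurable_fderiv_apply (hF : ∀ q, AEStronglyMeasurable (F q) μ)
    (hd : ∀ a, DifferentiableAt ℝ (F · a) q₀) (v : Q) :
    AEStronglyMeasurable (fun a => fderiv ℝ (F · a) q₀ v) μ := by
  have hu : Tendsto (fun n : ℕ => 1 / ((n : ℝ) + 1)) atTop (𝓝[≠] 0) :=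
    tendsto_nhdsWithin_iff.2 ⟨tendsto_one_div_add_atTop_nhds_zero_nat,
      .of_forall fun n => (Nat.one_div_pos_of_nat).ne'⟩
  refine aestronglyMeasurable_of_tendsto_ae atTop
    (f := fun (n : ℕ) a => slope (fun t : ℝ => F (q₀ + t • v) a) 0 (1 / ((n : ℝ) + 1)))
    (fun n => ?_) (.of_forall fun a => ?_)
  · simp only [slope_def_module]
    exact ((hF _).sub (hF _)).const_smul _
  · have hline : HasDerivAt (fun t : ℝ => F (q₀ + t • v) a) (fderiv ℝ (F · a) q₀ v) 0 :=
      (hd a).hasFDerivAt.comp_hasDerivAt_of_eq (0 : ℝ)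
        (by simpa using ((hasDerivAt_id (0 : ℝ)).smul_const v).const_add q₀) (by simp)
    exact (hasDerivAt_iff_tendsto_slope.1 hline).comp hu

theorem aestronglyMeasurable_fderiv [FiniteDimensional ℝ Q]
    (hF : ∀ q, AEStronglyMeasurable (F q) μ) (hd : ∀ a, DifferentiableAt ℝ (F · a) q₀) :
    AEStronglyMeasurable (fun a => fderiv ℝ (F · a) q₀) μ := by
  let b := Module.finBasis ℝ Q
  let coord i : Q →L[ℝ] ℝ := LinearMap.toContinuousLinearMap (b.coord i)
  have hsum : ∀ L : Q →L[ℝ] V, L = ∑ i, (coord i).smulRight (L (b i)) := fun L => by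
    ext v
    simp only [coord, sum_apply, ContinuousLinearMap.smulRight_apply,
      LinearMap.coe_toContinuousLinearMap', Module.Basis.coord_apply]
    conv_lhs => rw [← b.sum_repr v, map_sum]
    simp only [map_smul]
  rw [funext fun a => hsum (fderiv ℝ (F · a) q₀)]
  exact Finset.aestronglyMeasurable_fun_sum _ fun i _ =>
    (ContinuousLinearMap.smulRightL ℝ Q V (coord i)).continuous.comp_aestronglyMeasurable
      (aestronglyMeasurable_fderiv_apply hF hd (b i))

theorem contDiff_integral_of_norm_fderiv_le [FiniteDimensional ℝ Q] [CompleteSpace V]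
    {κ : α → ℝ} (hint : ∀ q, Integrable (F q) μ) (hF : ∀ a, ContDiff ℝ 1 (F · a))
    (hκ : Integrable κ μ) (hbd : ∀ q a, ‖fderiv ℝ (F · a) q‖ ≤ κ a) :
    ContDiff ℝ 1 (fun q => ∫ a, F q a ∂μ) := by
  have hdiff : ∀ a, Differentiable ℝ (F · a) := fun a => (hF a).differentiable one_ne_zero
  have hmeas : ∀ q, AEStronglyMeasurable (fun a => fderiv ℝ (F · a) q) μ := fun q =>
    aestronglyMeasurable_fderiv (fun q => (hint q).aestronglyMeasurable) fun a => hdiff a q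
  have hderiv : ∀ q, HasFDerivAt (fun q => ∫ a, F q a ∂μ) (∫ a, fderiv ℝ (F · a) q ∂μ) q :=
    fun q => hasFDerivAt_integral_of_dominated_of_fderiv_le univ_mem
      (.of_forall fun q => (hint q).aestronglyMeasurable) (hint q) (hmeas q)
      (.of_forall fun a q _ => hbd q a) hκ (.of_forall fun a q _ => (hdiff a q).hasFDerivAt)
  refine contDiff_one_iff_fderiv.2 ⟨fun q => (hderiv q).differentiableAt, ?_⟩
  rw [funext fun q => (hderiv q).fderiv]
  exact continuous_of_dominated hmeas (fun q => .of_forall (hbd q)) hκ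
    (.of_forall fun a => (hF a).continuous_fderiv one_ne_zero)

end ParametricIntegral

structure IsSmoothCDFFamily {P : Type*} [NormedAddCommGroup P] [NormedSpace ℝ P]
    (H : ℝ → P → ℝ) : Prop where
  contDiff : ContDiff ℝ 1 (fun q : ℝ × P => H q.1 q.2)
  tendsto_atTop : ∀ x, Tendsto (H · x) atTop (𝓝 1)
  tendsto_atBot : ∀ x, Tendsto (H · x) atBot (𝓝 0)

section SmoothCDFFamily

variable {P : Type*} [NormedAddCommGroup P] [NormedSpace ℝ P]

theorem isSmoothCDFFamily_sublevelMass [CompleteSpace P] {G : P × ℝ → ℝ} {f : ℝ → ℝ}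
    {δ M B : ℝ} (hG : ContDiff ℝ 1 G) (hδ : 0 < δ)
    (hGe : ∀ x e, δ ≤ deriv (fun t => G (x, t)) e)
    (hGx : ∀ x e, ‖fderiv ℝ (fun z => G (z, e)) x‖ ≤ M)
    (hf : Continuous f) (hfB : ∀ e, ‖f e‖ ≤ B) (hf1 : ∫ e, f e = 1) :
    IsSmoothCDFFamily (sublevelMass G f) := by
  have hf_int : Integrable f := .of_integral_ne_zero (by simp [hf1])
  have hGc : ∀ x, Continuous fun e => G (x, e) := fun x =>
    hG.continuous.comp (continuous_const.prodMk continuous_id)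
  refine ⟨(contDiff_sublevelMass hG hδ hGe hGx hf hf_int hfB).1, fun x => ?_, fun x => ?_⟩
  · exact hf1 ▸ tendsto_sublevelMass_atTop (hGc x) hf_int
  · exact tendsto_sublevelMass_atBot (hGc x) hf_int

theorem isSmoothCDFFamily_integral_mul [FiniteDimensional ℝ P] {α : Type*} [MeasurableSpace α]
    {μ : Measure α} {W : α → ℝ → P → ℝ} {ρ : α → ℝ} {D : ℝ}
    (hW : ∀ a, IsSmoothCDFFamily (W a)) (hW1 : ∀ a y x, |W a y x| ≤ 1)
    (hD : ∀ a q, ‖fderiv ℝ (fun q : ℝ × P => W a q.1 q.2) q‖ ≤ D)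
    (hρ : ∫ a, ρ a ∂μ = 1) (hint : ∀ y x, Integrable (fun a => W a y x * ρ a) μ) :
    IsSmoothCDFFamily (fun y x => ∫ a, W a y x * ρ a ∂μ) := by
  have hρ_int : Integrable ρ μ := .of_integral_ne_zero (by simp [hρ])
  refine ⟨contDiff_integral_of_norm_fderiv_le (κ := fun a => D * ‖ρ a‖) (fun q => hint q.1 q.2)
    (fun a => (hW a).contDiff.mul contDiff_const) (hρ_int.norm.const_mul D) fun q a => ?_,
    fun x => ?_, fun x => ?_⟩
  · rw [fderiv_mul_const ((hW a).contDiff.differentiable one_ne_zero q), norm_smul, mul_comm]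
    exact mul_le_mul_of_nonneg_right (hD a q) (norm_nonneg (ρ a))
  · simpa [hρ] using tendsto_integral_mul_of_tendsto (fun y => (hint y x).aestronglyMeasurable)
      (fun y a => hW1 a y x) hρ_int fun a => (hW a).tendsto_atTop x
  · simpa using tendsto_integral_mul_of_tendsto (fun y => (hint y x).aestronglyMeasurable)
      (fun y a => hW1 a y x) hρ_int fun a => (hW a).tendsto_atBot x

theorem IsSmoothCDFFamily.exists_contDiff_quantile [CompleteSpace P] {H : ℝ → P → ℝ}
    (hH : IsSmoothCDFFamily H) (hpos : ∀ y x, 0 < deriv (fun y' => H y' x) y)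
    {τ : ℝ} (hτ0 : 0 < τ) (hτ1 : τ < 1) :
    ∃ r : P → ℝ, (∀ x, H (r x) x = τ ∧ ∀ y, H y x = τ → y = r x) ∧ ContDiff ℝ 1 r ∧
      ∀ x, fderiv ℝ r x = -(deriv (fun y => H y x) (r x))⁻¹ • fderiv ℝ (fun z => H (r x) z) x := by
  have hex : ∀ x, ∃ y, H y x = τ := fun x =>
    mem_range_of_exists_le_of_exists_ge
      (hH.contDiff.continuous.comp (continuous_id.prodMk continuous_const))
      ((hH.tendsto_atBot x).eventually (ge_mem_nhds hτ0)).exists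
      ((hH.tendsto_atTop x).eventually (le_mem_nhds hτ1)).exists
  obtain ⟨r, hrC, hr, huniq, hrd⟩ := exists_contDiff_implicit (F := fun p : P × ℝ => H p.2 p.1)
    (hH.contDiff.comp (contDiff_snd.prodMk contDiff_fst)) (fun x t => hpos t x) hex
  exact ⟨r, fun x => ⟨hr x, huniq x⟩, hrC, hrd⟩

end SmoothCDFFamily

section ConditionalCDF

variable {P : Type*} [NormedAddCommGroup P] [NormedSpace ℝ P] [FiniteDimensional ℝ P]
  {α : Type*} [MeasurableSpace α] {μ : Measure α}

theorem isSmoothCDFFamily_integral_sublevelMass_mul {G : α → P × ℝ → ℝ} {f : α → ℝ → ℝ}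
    {ρ : α → ℝ} {δ M B : ℝ} (hG : ∀ a, ContDiff ℝ 1 (G a)) (hδ : 0 < δ)
    (hGe : ∀ a x e, δ ≤ deriv (fun t => G a (x, t)) e)
    (hGx : ∀ a x e, ‖fderiv ℝ (fun z => G a (z, e)) x‖ ≤ M)
    (hf : ∀ a, Continuous (f a)) (hf0 : ∀ a e, 0 ≤ f a e) (hfB : ∀ a e, f a e ≤ B)
    (hf1 : ∀ a, ∫ e, f a e = 1) (hρ0 : ∀ a, 0 ≤ ρ a) (hρ1 : ∫ a, ρ a ∂μ = 1)
    (hpos : ∀ y x, 0 < deriv (fun y' => ∫ a, sublevelMass (G a) (f a) y' x * ρ a ∂μ) y) :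
    IsSmoothCDFFamily (fun y x => ∫ a, sublevelMass (G a) (f a) y x * ρ a ∂μ) := by
  have hfB' : ∀ a e, ‖f a e‖ ≤ B := fun a e => by
    rw [Real.norm_of_nonneg (hf0 a e)]; exact hfB a e
  have hf_int : ∀ a, Integrable (f a) := fun a => .of_integral_ne_zero (by simp [hf1 a])
  have hW1 : ∀ a y x, |sublevelMass (G a) (f a) y x| ≤ 1 := fun a y x => by
    rw [abs_of_nonneg (sublevelMass_nonneg (hf0 a) y x), ← hf1 a]
    exact sublevelMass_le_integral ((hG a).continuous.comp (continuous_const.prodMk continuous_id))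
      (hf_int a) (hf0 a) y
  refine isSmoothCDFFamily_integral_mul
    (fun a => isSmoothCDFFamily_sublevelMass (hG a) hδ (hGe a) (hGx a) (hf a) (hfB' a) (hf1 a))
    hW1 (fun a => (contDiff_sublevelMass (hG a) hδ (hGe a) (hGx a) (hf a) (hf_int a) (hfB' a)).2)
    hρ1 fun y x => integrable_of_deriv_integral_pos (fun y a => ?_) (hpos y x)
  exact mul_nonneg (sublevelMass_nonneg (hf0 a) y x) (hρ0 a)

end ConditionalCDF

theorem contDiff_comp_and_partial_bounds {E : Type*} [NormedAddCommGroup E] [NormedSpace ℝ E]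
    {ψ₁ : ℝ → ℝ} {f : E × ℝ → ℝ} {K C : ℝ} (hK : 0 < K) (hC : 0 < C)
    (hψ : ContDiff ℝ 1 ψ₁) (hψlb : ∀ y, 1 / K ≤ deriv ψ₁ y) (hψub : ∀ y, deriv ψ₁ y ≤ K)
    (hf : ContDiff ℝ 1 f) (hfe : ∀ x e, 1 / C ≤ deriv (fun e' => f (x, e')) e)
    (hfx : ∀ x e, ‖fderiv ℝ (fun z => f (z, e)) x‖ ≤ C) (x : E) (e : ℝ) :
    ContDiff ℝ 1 (fun q : E × ℝ => ψ₁ (f q)) ∧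
    deriv (fun e' => ψ₁ (f (x, e'))) e
      = deriv ψ₁ (f (x, e)) * deriv (fun e' => f (x, e')) e ∧
    1 / (K * C) ≤ deriv (fun e' => ψ₁ (f (x, e'))) e ∧
    fderiv ℝ (fun z => ψ₁ (f (z, e))) x
      = deriv ψ₁ (f (x, e)) • fderiv ℝ (fun z => f (z, e)) x ∧
    ‖fderiv ℝ (fun z => ψ₁ (f (z, e))) x‖
      = deriv ψ₁ (f (x, e)) * ‖fderiv ℝ (fun z => f (z, e)) x‖ ∧
    ‖fderiv ℝ (fun z => ψ₁ (f (z, e))) x‖ ≤ K * C := by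
  have hψd : HasDerivAt ψ₁ (deriv ψ₁ (f (x, e))) (f (x, e)) :=
    (hψ.differentiable one_ne_zero _).hasDerivAt
  have hψ0 : 0 ≤ deriv ψ₁ (f (x, e)) := (one_div_pos.2 hK).le.trans (hψlb _)
  have hde : deriv (fun e' => ψ₁ (f (x, e'))) e
      = deriv ψ₁ (f (x, e)) * deriv (fun e' => f (x, e')) e :=
    (hψd.comp e ((hf.comp (contDiff_const.prodMk contDiff_id)).differentiable one_ne_zero
      e).hasDerivAt).deriv
  have hdx : fderiv ℝ (fun z => ψ₁ (f (z, e))) x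
      = deriv ψ₁ (f (x, e)) • fderiv ℝ (fun z => f (z, e)) x :=
    (hψd.comp_hasFDerivAt x ((hf.comp (contDiff_id.prodMk contDiff_const)).differentiable
      one_ne_zero x).hasFDerivAt).fderiv
  have hnorm : ‖fderiv ℝ (fun z => ψ₁ (f (z, e))) x‖
      = deriv ψ₁ (f (x, e)) * ‖fderiv ℝ (fun z => f (z, e)) x‖ := by
    rw [hdx, norm_smul, Real.norm_of_nonneg hψ0]
  refine ⟨hψ.comp hf, hde, ?_, hdx, hnorm, ?_⟩
  · rw [hde, ← one_div_mul_one_div]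
    exact mul_le_mul (hψlb _) (hfe x e) (one_div_pos.2 hC).le hψ0
  · rw [hnorm]
    exact mul_le_mul (hψub _) (hfx x e) (norm_nonneg _) hK.le

theorem quantile_of_transformation_general
    (k m p : ℕ)
    (ψ : ℝ → ℝ → ℝ) (K : ℝ) (hK : 0 < K)
    (hψ_smooth : ∀ y₁, ContDiff ℝ 1 (fun y₂ => ψ y₁ y₂))
    (hψ_lb : ∀ y₁ y₂, 1 / K ≤ deriv (fun y => ψ y₁ y) y₂)
    (hψ_ub : ∀ y₁ y₂, deriv (fun y => ψ y₁ y) y₂ ≤ K)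
    (φ : EuclideanSpace ℝ (Fin k) → EuclideanSpace ℝ (Fin m) → ℝ →
      EuclideanSpace ℝ (Fin p) → ℝ)
    (C : ℝ) (hC : 0 < C)
    (hφ_smooth : ∀ ht a, ContDiff ℝ 1
      (fun q : EuclideanSpace ℝ (Fin k) × ℝ => φ q.1 ht q.2 a))
    (hφe : ∀ x ht e a, 1 / C ≤ deriv (fun e' => φ x ht e' a) e)
    (hφx : ∀ x ht e a, ‖fderiv ℝ (fun x' => φ x' ht e a) x‖ ≤ C)
    -- the "remaining" unobservables h = (ht, a, v₁) with v₁ = (ht1, e₁)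
    (fE : ℝ → (EuclideanSpace ℝ (Fin m) × EuclideanSpace ℝ (Fin p) ×
      (EuclideanSpace ℝ (Fin m) × ℝ)) → EuclideanSpace ℝ (Fin k) → ℝ)
    (hfE_nonneg : ∀ e h x₁, 0 ≤ fE e h x₁)
    (hfE_prob : ∀ h x₁, ∫ e, fE e h x₁ = 1)
    (B : ℝ) (hfE_bdd : ∀ e h x₁, fE e h x₁ ≤ B)
    (hfE_cont : ∀ h x₁, Continuous (fun e => fE e h x₁))
    (fH : (EuclideanSpace ℝ (Fin m) × EuclideanSpace ℝ (Fin p) ×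
      (EuclideanSpace ℝ (Fin m) × ℝ)) → EuclideanSpace ℝ (Fin k) → ℝ)
    (hfH_nonneg : ∀ h x₁, 0 ≤ fH h x₁)
    (hfH_prob : ∀ x₁, ∫ h, fH h x₁ = 1)
    -- conditional CDF of Ỹ = ψ(Y₁,Y₂) given X₁ = x₁, X₂ = x₂
    (H : ℝ → EuclideanSpace ℝ (Fin k) → EuclideanSpace ℝ (Fin k) → ℝ)
    (hH : ∀ y x₁ x₂, H y x₁ x₂
      = ∫ h : EuclideanSpace ℝ (Fin m) × EuclideanSpace ℝ (Fin p) ×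
          (EuclideanSpace ℝ (Fin m) × ℝ),
          (∫ e, if ψ (φ x₁ h.2.2.1 h.2.2.2 h.2.1) (φ x₂ h.1 e h.2.1) ≤ y
            then fE e h x₁ else 0) * fH h x₁)
    -- positivity of the conditional density of Ỹ given X₁ = x₁, X₂ = x₂
    (hpos : ∀ (y : ℝ) (x₁ x₂ : EuclideanSpace ℝ (Fin k)),
      0 < deriv (fun y' => H y' x₁ x₂) y) :
    -- chain-rule properties of the composite structural function g
    (∀ (x₁ x₂ : EuclideanSpace ℝ (Fin k))
      (h : EuclideanSpace ℝ (Fin m) × EuclideanSpace ℝ (Fin p) ×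
        (EuclideanSpace ℝ (Fin m) × ℝ)) (e : ℝ),
      ContDiff ℝ 1 (fun q : EuclideanSpace ℝ (Fin k) × ℝ =>
        ψ (φ x₁ h.2.2.1 h.2.2.2 h.2.1) (φ q.1 h.1 q.2 h.2.1)) ∧
      deriv (fun e' => ψ (φ x₁ h.2.2.1 h.2.2.2 h.2.1) (φ x₂ h.1 e' h.2.1)) e
        = deriv (fun y => ψ (φ x₁ h.2.2.1 h.2.2.2 h.2.1) y) (φ x₂ h.1 e h.2.1)
          * deriv (fun e' => φ x₂ h.1 e' h.2.1) e ∧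
      1 / (K * C)
        ≤ deriv (fun e' => ψ (φ x₁ h.2.2.1 h.2.2.2 h.2.1) (φ x₂ h.1 e' h.2.1)) e ∧
      fderiv ℝ (fun z => ψ (φ x₁ h.2.2.1 h.2.2.2 h.2.1) (φ z h.1 e h.2.1)) x₂
        = deriv (fun y => ψ (φ x₁ h.2.2.1 h.2.2.2 h.2.1) y) (φ x₂ h.1 e h.2.1)
          • fderiv ℝ (fun z => φ z h.1 e h.2.1) x₂ ∧
      ‖fderiv ℝ (fun z => ψ (φ x₁ h.2.2.1 h.2.2.2 h.2.1) (φ z h.1 e h.2.1)) x₂‖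
        = deriv (fun y => ψ (φ x₁ h.2.2.1 h.2.2.2 h.2.1) y) (φ x₂ h.1 e h.2.1)
          * ‖fderiv ℝ (fun z => φ z h.1 e h.2.1) x₂‖ ∧
      ‖fderiv ℝ (fun z => ψ (φ x₁ h.2.2.1 h.2.2.2 h.2.1) (φ z h.1 e h.2.1)) x₂‖
        ≤ K * C) ∧
    -- existence, uniqueness, smoothness and derivative of the conditional quantile of Ỹ
    (∃ qt : ℝ → EuclideanSpace ℝ (Fin k) → EuclideanSpace ℝ (Fin k) → ℝ,
      ∀ τ : ℝ, 0 < τ → τ < 1 → ∀ x₁ : EuclideanSpace ℝ (Fin k),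
        (∀ x₂, H (qt τ x₁ x₂) x₁ x₂ = τ ∧ ∀ y, H y x₁ x₂ = τ → y = qt τ x₁ x₂) ∧
        ContDiff ℝ 1 (fun z => qt τ x₁ z) ∧
        ∀ x₂ : EuclideanSpace ℝ (Fin k),
          fderiv ℝ (fun z => qt τ x₁ z) x₂
            = -(deriv (fun y => H y x₁ x₂) (qt τ x₁ x₂))⁻¹ •
                fderiv ℝ (fun z => H (qt τ x₁ x₂) x₁ z) x₂) := by
  have hg := fun (x₁ x₂ : EuclideanSpace ℝ (Fin k))
      (h : EuclideanSpace ℝ (Fin m) × EuclideanSpace ℝ (Fin p) ×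
        (EuclideanSpace ℝ (Fin m) × ℝ)) (e : ℝ) =>
    contDiff_comp_and_partial_bounds hK hC (hψ_smooth (φ x₁ h.2.2.1 h.2.2.2 h.2.1))
      (hψ_lb _) (hψ_ub _) (hφ_smooth h.1 h.2.1) (fun x e' => hφe x h.1 e' h.2.1)
      (fun x e' => hφx x h.1 e' h.2.1) x₂ e
  refine ⟨hg, ?_⟩
  have hquant : ∀ τ x₁, ∃ r : EuclideanSpace ℝ (Fin k) → ℝ, 0 < τ → τ < 1 →
      (∀ x₂, H (r x₂) x₁ x₂ = τ ∧ ∀ y, H y x₁ x₂ = τ → y = r x₂) ∧ ContDiff ℝ 1 r ∧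
      ∀ x₂, fderiv ℝ r x₂ = -(deriv (fun y => H y x₁ x₂) (r x₂))⁻¹ •
        fderiv ℝ (fun z => H (r x₂) x₁ z) x₂ := by
    intro τ x₁
    by_cases hτ : 0 < τ ∧ τ < 1
    · have hcdf : IsSmoothCDFFamily (fun y x₂ => H y x₁ x₂) := by
        simp only [hH] at hpos ⊢
        exact isSmoothCDFFamily_integral_sublevelMass_mul (fun h => (hg x₁ 0 h 0).1)
          (by positivity) (fun h x e => (hg x₁ x h e).2.2.1)
          (fun h x e => (hg x₁ x h e).2.2.2.2.2) (hfE_cont · x₁) (fun h e => hfE_nonneg e h x₁)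
          (fun h e => hfE_bdd e h x₁) (hfE_prob · x₁) (hfH_nonneg · x₁) (hfH_prob x₁) (hpos · x₁)
      obtain ⟨r, hr⟩ := hcdf.exists_contDiff_quantile (fun y x₂ => hpos y x₁ x₂) hτ.1 hτ.2
      exact ⟨r, fun _ _ => hr⟩
    · exact ⟨0, fun h₀ h₁ => absurd ⟨h₀, h₁⟩ hτ⟩
  choose qt hqt using hquant
  exact ⟨qt, fun τ h₀ h₁ x₁ => hqt τ x₁ h₀ h₁⟩

/-- Corollary: quantiles of transformations `Ỹ = ψ(Y₁,Y₂)` of the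
dependent variables.  The composite `g(x₁,x₂,(ht,a,v₁),e) = ψ(φ(x₁,v₁,a), φ(x₂,ht,e,a))`
is continuously differentiable in `(x₂,e)` with `∂_e g = ∂_{y₂}ψ · ∂_e φ ≥ 1/(KC)` and
`‖∂_{x₂} g‖ = ∂_{y₂}ψ · ‖∂_x φ‖ ≤ KC`; hence, if the conditional density of `Ỹ` given
`X₁ = x₁, X₂ = x₂` is positive everywhere, then for every `τ ∈ (0,1)` the conditional
`τ`-quantile `q̃(τ,x₁,x₂)` of `Ỹ` exists, is continuously differentiable in `x₂`, and
`∂_{x₂} q̃ = −∂_{x₂}H̃/∂_y H̃`, the conditional average of `∂_{y₂}ψ(Y₁,Y₂)·∂_x φ(x₂,V₂,A)`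
on the corresponding quantile level set. -/
theorem quantile_of_transformation
    (k m p : ℕ) (hk : 1 ≤ k)
    (ψ : ℝ → ℝ → ℝ) (K : ℝ) (hK : 0 < K)
    (hψ_smooth : ∀ y₁, ContDiff ℝ 1 (fun y₂ => ψ y₁ y₂))
    (hψ_lb : ∀ y₁ y₂, 1 / K ≤ deriv (fun y => ψ y₁ y) y₂)
    (hψ_ub : ∀ y₁ y₂, deriv (fun y => ψ y₁ y) y₂ ≤ K)
    (φ : EuclideanSpace ℝ (Fin k) → EuclideanSpace ℝ (Fin m) → ℝ →
      EuclideanSpace ℝ (Fin p) → ℝ)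
    (C : ℝ) (hC : 0 < C)
    (hφ_smooth : ∀ ht a, ContDiff ℝ 1
      (fun q : EuclideanSpace ℝ (Fin k) × ℝ => φ q.1 ht q.2 a))
    (hφe : ∀ x ht e a, 1 / C ≤ deriv (fun e' => φ x ht e' a) e)
    (hφx : ∀ x ht e a, ‖fderiv ℝ (fun x' => φ x' ht e a) x‖ ≤ C)
    -- the "remaining" unobservables h = (ht, a, v₁) with v₁ = (ht1, e₁)
    (fE : ℝ → (EuclideanSpace ℝ (Fin m) × EuclideanSpace ℝ (Fin p) ×
      (EuclideanSpace ℝ (Fin m) × ℝ)) → EuclideanSpace ℝ (Fin k) → ℝ)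
    (hfE_nonneg : ∀ e h x₁, 0 ≤ fE e h x₁)
    (hfE_prob : ∀ h x₁, ∫ e, fE e h x₁ = 1)
    (B : ℝ) (hfE_bdd : ∀ e h x₁, fE e h x₁ ≤ B)
    (hfE_cont : ∀ h x₁, Continuous (fun e => fE e h x₁))
    (fH : (EuclideanSpace ℝ (Fin m) × EuclideanSpace ℝ (Fin p) ×
      (EuclideanSpace ℝ (Fin m) × ℝ)) → EuclideanSpace ℝ (Fin k) → ℝ)
    (hfH_nonneg : ∀ h x₁, 0 ≤ fH h x₁)
    (hfH_prob : ∀ x₁, ∫ h, fH h x₁ = 1)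
    -- conditional CDF of Ỹ = ψ(Y₁,Y₂) given X₁ = x₁, X₂ = x₂
    (H : ℝ → EuclideanSpace ℝ (Fin k) → EuclideanSpace ℝ (Fin k) → ℝ)
    (hH : ∀ y x₁ x₂, H y x₁ x₂
      = ∫ h : EuclideanSpace ℝ (Fin m) × EuclideanSpace ℝ (Fin p) ×
          (EuclideanSpace ℝ (Fin m) × ℝ),
          (∫ e, if ψ (φ x₁ h.2.2.1 h.2.2.2 h.2.1) (φ x₂ h.1 e h.2.1) ≤ y
            then fE e h x₁ else 0) * fH h x₁)
    -- positivity of the conditional density of Ỹ given X₁ = x₁, X₂ = x₂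
    (hpos : ∀ (y : ℝ) (x₁ x₂ : EuclideanSpace ℝ (Fin k)),
      0 < deriv (fun y' => H y' x₁ x₂) y) :
    -- chain-rule properties of the composite structural function g
    (∀ (x₁ x₂ : EuclideanSpace ℝ (Fin k))
      (h : EuclideanSpace ℝ (Fin m) × EuclideanSpace ℝ (Fin p) ×
        (EuclideanSpace ℝ (Fin m) × ℝ)) (e : ℝ),
      ContDiff ℝ 1 (fun q : EuclideanSpace ℝ (Fin k) × ℝ =>
        ψ (φ x₁ h.2.2.1 h.2.2.2 h.2.1) (φ q.1 h.1 q.2 h.2.1)) ∧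
      deriv (fun e' => ψ (φ x₁ h.2.2.1 h.2.2.2 h.2.1) (φ x₂ h.1 e' h.2.1)) e
        = deriv (fun y => ψ (φ x₁ h.2.2.1 h.2.2.2 h.2.1) y) (φ x₂ h.1 e h.2.1)
          * deriv (fun e' => φ x₂ h.1 e' h.2.1) e ∧
      1 / (K * C)
        ≤ deriv (fun e' => ψ (φ x₁ h.2.2.1 h.2.2.2 h.2.1) (φ x₂ h.1 e' h.2.1)) e ∧
      fderiv ℝ (fun z => ψ (φ x₁ h.2.2.1 h.2.2.2 h.2.1) (φ z h.1 e h.2.1)) x₂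
        = deriv (fun y => ψ (φ x₁ h.2.2.1 h.2.2.2 h.2.1) y) (φ x₂ h.1 e h.2.1)
          • fderiv ℝ (fun z => φ z h.1 e h.2.1) x₂ ∧
      ‖fderiv ℝ (fun z => ψ (φ x₁ h.2.2.1 h.2.2.2 h.2.1) (φ z h.1 e h.2.1)) x₂‖
        = deriv (fun y => ψ (φ x₁ h.2.2.1 h.2.2.2 h.2.1) y) (φ x₂ h.1 e h.2.1)
          * ‖fderiv ℝ (fun z => φ z h.1 e h.2.1) x₂‖ ∧
      ‖fderiv ℝ (fun z => ψ (φ x₁ h.2.2.1 h.2.2.2 h.2.1) (φ z h.1 e h.2.1)) x₂‖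
        ≤ K * C) ∧
    -- existence, uniqueness, smoothness and derivative of the conditional quantile of Ỹ
    (∃ qt : ℝ → EuclideanSpace ℝ (Fin k) → EuclideanSpace ℝ (Fin k) → ℝ,
      ∀ τ : ℝ, 0 < τ → τ < 1 → ∀ x₁ : EuclideanSpace ℝ (Fin k),
        (∀ x₂, H (qt τ x₁ x₂) x₁ x₂ = τ ∧ ∀ y, H y x₁ x₂ = τ → y = qt τ x₁ x₂) ∧
        ContDiff ℝ 1 (fun z => qt τ x₁ z) ∧
        ∀ x₂ : EuclideanSpace ℝ (Fin k),
          fderiv ℝ (fun z => qt τ x₁ z) x₂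
            = -(deriv (fun y => H y x₁ x₂) (qt τ x₁ x₂))⁻¹ •
                fderiv ℝ (fun z => H (qt τ x₁ x₂) x₁ z) x₂) :=
  quantile_of_transformation_general k m p ψ K hK hψ_smooth hψ_lb hψ_ub φ C hC hφ_smooth hφe hφx fE
    hfE_nonneg hfE_prob B hfE_bdd hfE_cont fH hfH_nonneg hfH_prob H hH hpos
end

section
/- Under the stated conditions, for any 0 < τ₃ < 1 and 0 < τ₂ < τ₁ < 1 such that Q₁(τ₁|x,x) − Q₁(τ₂|x,x) > 0: σ(x) = [Q₂(τ₁|x,x) − Q₂(τ₂|x,x)] / [Q₁(τ₁|x,x) − Q₁(τ₂|x,x)] and μ₂(x) − σ(x) μ₁(x) = Q₂(τ₃|x,x) − σ(x) Q₁(τ₃|x,x), where σ(x) := σ₂(x)/σ₁(x); i.e., the scale time effect ratio is identified from a ratio of interquantile ranges and the location time effect difference from a difference of conditional quantiles at X₁ = X₂ = x. -/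
open MeasureTheory

noncomputable section

/-- Theorem 4, identification of the time effects from quantiles.
In the two-period panel model with location and scale time effects
`Y_t = μ_t(X_t) + σ_t(X_t) φ(X_t,U_t)` and time-homogeneous conditional density
`f(u|x₁,x₂)`, for any `0 < τ₃ < 1` and `0 < τ₂ < τ₁ < 1` with
`Q₁(τ₁|x,x) − Q₁(τ₂|x,x) > 0`:
`σ(x) = [Q₂(τ₁|x,x) − Q₂(τ₂|x,x)]/[Q₁(τ₁|x,x) − Q₁(τ₂|x,x)]` and
`μ₂(x) − σ(x) μ₁(x) = Q₂(τ₃|x,x) − σ(x) Q₁(τ₃|x,x)`, where `σ(x) = σ₂(x)/σ₁(x)`. -/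
theorem time_effects_identification_from_quantiles
    (k m : ℕ) (hk : 1 ≤ k)
    (φ : EuclideanSpace ℝ (Fin k) → EuclideanSpace ℝ (Fin m) → ℝ → ℝ)
    (μ₁ μ₂ σ₁ σ₂ : EuclideanSpace ℝ (Fin k) → ℝ)
    (hμ₁ : ContDiff ℝ 1 μ₁) (hμ₂ : ContDiff ℝ 1 μ₂)
    (hσ₁ : ContDiff ℝ 1 σ₁) (hσ₂ : ContDiff ℝ 1 σ₂)
    (hσ₁_pos : ∀ x', 0 < σ₁ x') (hσ₂_pos : ∀ x', 0 < σ₂ x')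
    (C : ℝ) (hC : 0 < C)
    (hφ_smooth : ∀ h, ContDiff ℝ 1 (fun p : EuclideanSpace ℝ (Fin k) × ℝ => φ p.1 h p.2))
    (hφe : ∀ x' h e, 1 / C ≤ deriv (fun e' => φ x' h e') e)
    (hφx : ∀ x' h e, ‖fderiv ℝ (fun z => φ z h e) x'‖ ≤ C)
    (f : EuclideanSpace ℝ (Fin m) × ℝ → EuclideanSpace ℝ (Fin k) → EuclideanSpace ℝ (Fin k) → ℝ)
    (hf_nonneg : ∀ u x₁ x₂, 0 ≤ f u x₁ x₂)
    (hf_prob : ∀ x₁ x₂, ∫ u, f u x₁ x₂ = 1)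
    (G : ℝ → EuclideanSpace ℝ (Fin k) → EuclideanSpace ℝ (Fin k) → EuclideanSpace ℝ (Fin k) → ℝ)
    (hG : ∀ y x' x₁ x₂, G y x' x₁ x₂
      = ∫ u : EuclideanSpace ℝ (Fin m) × ℝ, if φ x' u.1 u.2 ≤ y then f u x₁ x₂ else 0)
    (hGy_pos : ∀ (y : ℝ) (x' x₁ x₂ : EuclideanSpace ℝ (Fin k)),
      0 < deriv (fun y' => G y' x' x₁ x₂) y)
    (q : ℝ → EuclideanSpace ℝ (Fin k) → ℝ)
    (hq : ∀ (τ : ℝ) (x' : EuclideanSpace ℝ (Fin k)), 0 < τ → τ < 1 →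
      G (q τ x') x' x' x' = τ ∧ ∀ y, G y x' x' x' = τ → y = q τ x')
    (Q₁ Q₂ : ℝ → EuclideanSpace ℝ (Fin k) → EuclideanSpace ℝ (Fin k) → ℝ)
    (hQ₁ : ∀ (τ : ℝ), 0 < τ → τ < 1 → ∀ x₁ x₂,
      (∫ u : EuclideanSpace ℝ (Fin m) × ℝ,
        if μ₁ x₁ + σ₁ x₁ * φ x₁ u.1 u.2 ≤ Q₁ τ x₁ x₂ then f u x₁ x₂ else 0) = τ ∧
      ∀ y, (∫ u : EuclideanSpace ℝ (Fin m) × ℝ,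
        if μ₁ x₁ + σ₁ x₁ * φ x₁ u.1 u.2 ≤ y then f u x₁ x₂ else 0) = τ → y = Q₁ τ x₁ x₂)
    (hQ₂ : ∀ (τ : ℝ), 0 < τ → τ < 1 → ∀ x₁ x₂,
      (∫ u : EuclideanSpace ℝ (Fin m) × ℝ,
        if μ₂ x₂ + σ₂ x₂ * φ x₂ u.1 u.2 ≤ Q₂ τ x₁ x₂ then f u x₁ x₂ else 0) = τ ∧
      ∀ y, (∫ u : EuclideanSpace ℝ (Fin m) × ℝ,
        if μ₂ x₂ + σ₂ x₂ * φ x₂ u.1 u.2 ≤ y then f u x₁ x₂ else 0) = τ → y = Q₂ τ x₁ x₂)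
    (x : EuclideanSpace ℝ (Fin k))
    (τ₁ τ₂ τ₃ : ℝ) (hτ₃ : 0 < τ₃ ∧ τ₃ < 1)
    (hτ₂ : 0 < τ₂) (hτ₂₁ : τ₂ < τ₁) (hτ₁ : τ₁ < 1)
    (hQgap : 0 < Q₁ τ₁ x x - Q₁ τ₂ x x) :
    σ₂ x / σ₁ x = (Q₂ τ₁ x x - Q₂ τ₂ x x) / (Q₁ τ₁ x x - Q₁ τ₂ x x) ∧
    μ₂ x - (σ₂ x / σ₁ x) * μ₁ x = Q₂ τ₃ x x - (σ₂ x / σ₁ x) * Q₁ τ₃ x x := by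
  have key1 : ∀ τ : ℝ, 0 < τ → τ < 1 → Q₁ τ x x = μ₁ x + σ₁ x * q τ x := by
    intro τ h0 h1
    refine ((hQ₁ τ h0 h1 x x).2 _ ?_).symm
    have : (∫ u : EuclideanSpace ℝ (Fin m) × ℝ,
        if μ₁ x + σ₁ x * φ x u.1 u.2 ≤ μ₁ x + σ₁ x * q τ x then f u x x else 0)
        = G (q τ x) x x x := by
      rw [hG]
      congr 1; funext u
      have : (μ₁ x + σ₁ x * φ x u.1 u.2 ≤ μ₁ x + σ₁ x * q τ x) ↔ φ x u.1 u.2 ≤ q τ x := by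
        constructor <;> intro h
        · nlinarith [hσ₁_pos x]
        · nlinarith [hσ₁_pos x]
      simp [this]
    rw [this, (hq τ x h0 h1).1]
  have key2 : ∀ τ : ℝ, 0 < τ → τ < 1 → Q₂ τ x x = μ₂ x + σ₂ x * q τ x := by
    intro τ h0 h1
    refine ((hQ₂ τ h0 h1 x x).2 _ ?_).symm
    have : (∫ u : EuclideanSpace ℝ (Fin m) × ℝ,
        if μ₂ x + σ₂ x * φ x u.1 u.2 ≤ μ₂ x + σ₂ x * q τ x then f u x x else 0)
        = G (q τ x) x x x := by
      rw [hG]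
      congr 1; funext u
      have : (μ₂ x + σ₂ x * φ x u.1 u.2 ≤ μ₂ x + σ₂ x * q τ x) ↔ φ x u.1 u.2 ≤ q τ x := by
        constructor <;> intro h
        · nlinarith [hσ₂_pos x]
        · nlinarith [hσ₂_pos x]
      simp [this]
    rw [this, (hq τ x h0 h1).1]
  have h1a := key1 τ₁ (hτ₂.trans hτ₂₁) hτ₁
  have h1b := key1 τ₂ hτ₂ (hτ₂₁.trans hτ₁)
  have h1c := key1 τ₃ hτ₃.1 hτ₃.2
  have h2a := key2 τ₁ (hτ₂.trans hτ₂₁) hτ₁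
  have h2b := key2 τ₂ hτ₂ (hτ₂₁.trans hτ₁)
  have h2c := key2 τ₃ hτ₃.1 hτ₃.2
  have hs1 := hσ₁_pos x
  have hqgap : 0 < q τ₁ x - q τ₂ x := by
    rw [h1a, h1b] at hQgap; nlinarith
  have hne : σ₁ x ≠ 0 := hs1.ne'
  have hd : μ₁ x + σ₁ x * q τ₁ x - (μ₁ x + σ₁ x * q τ₂ x) ≠ 0 := by nlinarith
  constructor
  · rw [h1a, h1b, h2a, h2b, div_eq_div_iff hne (by nlinarith : (0:ℝ) < μ₁ x + σ₁ x * q τ₁ x - (μ₁ x + σ₁ x * q τ₂ x)).ne']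
    ring
  · rw [h1c, h2c]
    field_simp
    ring
end
end
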